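/- arXiv:1701.03004 — 7 statements merged into one kernel-verified Lean document; each statement's English description precedes it below -/
import Mathlib

section
/- If an item's decayed frequency exceeds half the total decayed count of a cell's sub-stream, i.e., f_v > C_cell/2, then in a Space Saving summary with 2 counters satisfying |S| = C_cell and f_v ≤ f̂_v for monitored items and f_v ≤ f̂^min for unmonitored items, the item v is monitored and is the counter with maximum estimated frequency. -/
/-! A counter whose value bounds a frequency above half the total `e₁ + e₂` must be the larger
counter, and no unmonitored item can reach that frequency, since `min e₁ e₂` is at most the
average `(e₁ + e₂) / 2`. -/

section HalfSum

variable {K : Type*} [Field K] [LinearOrder K] [IsStrictOrderedRing K]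

theorem min_le_add_div_two (a b : K) : min a b ≤ (a + b) / 2 := by
  linarith [min_le_left a b, min_le_right a b]

theorem lt_of_add_div_two_lt_of_le {a b x : K} (hx : (a + b) / 2 < x) (hxa : x ≤ a) : b < a := by
  linarith

end HalfSum

theorem majority_item_is_max_counter_general
    {α : Type*}
    (c₁ c₂ : α) (e₁ e₂ Ccell : ℝ) (f : α → ℝ)
    (hsum : e₁ + e₂ = Ccell)
    (h₁ : f c₁ ≤ e₁) (h₂ : f c₂ ≤ e₂)
    (hun : ∀ u : α, u ≠ c₁ → u ≠ c₂ → f u ≤ min e₁ e₂)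
    (v : α) (hv : f v > Ccell / 2) :
    (v = c₁ ∧ e₂ ≤ e₁) ∨ (v = c₂ ∧ e₁ ≤ e₂) := by
  subst hsum
  by_cases hv₁ : v = c₁
  · subst hv₁
    exact Or.inl ⟨rfl, (lt_of_add_div_two_lt_of_le hv h₁).le⟩
  by_cases hv₂ : v = c₂
  · subst hv₂
    exact Or.inr ⟨rfl, (lt_of_add_div_two_lt_of_le (add_comm e₁ e₂ ▸ hv) h₂).le⟩
  have hv_le : f v ≤ (e₁ + e₂) / 2 := (hun v hv₁ hv₂).trans (min_le_add_div_two e₁ e₂)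
  exact absurd hv (not_lt.2 hv_le)

/-- If an item's decayed frequency exceeds half the total decayed count of a
cell's sub-stream (`f v > C_cell / 2`), then in a 2-counter Space Saving summary
(counters monitoring items `c₁, c₂` with values `e₁, e₂`) satisfying
`e₁ + e₂ = C_cell`, `f cᵢ ≤ eᵢ` and `f u ≤ min e₁ e₂` for unmonitored `u`,
the item `v` is monitored and is the counter with maximum estimated frequency. -/
theorem majority_item_is_max_counter
    {α : Type*} [DecidableEq α]
    (c₁ c₂ : α) (e₁ e₂ Ccell : ℝ) (f : α → ℝ)
    (hsum : e₁ + e₂ = Ccell)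
    (h₁ : f c₁ ≤ e₁) (h₂ : f c₂ ≤ e₂)
    (hun : ∀ u : α, u ≠ c₁ → u ≠ c₂ → f u ≤ min e₁ e₂)
    (v : α) (hv : f v > Ccell / 2) :
    (v = c₁ ∧ e₂ ≤ e₁) ∨ (v = c₂ ∧ e₁ ≤ e₂) :=
  majority_item_is_max_counter_general c₁ c₂ e₁ e₂ Ccell f hsum h₁ h₂ hun v hv
end

section
/- The combine operation on two Space Saving summaries preserves the lower-bound property: if for i = 1, 2 and every monitored item e ∈ Σ_i it holds that f_{N_i}(e) ≤ f̂_{S_i}(e), and for unmonitored items f_{N_i}(e) ≤ f̂_{S_i}^min, then for every item e in the combined summary S_C, the true combined frequency satisfies f_{N_1}(e) + f_{N_2}(e) ≤ f̂_{S_C}(e). -/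
/-! A Space Saving summary bounds every item's frequency by its counter if the item is monitored and
by the minimum counter otherwise. On the union of the supports the combined counter is exactly the sum
of these two completed bounds, so the lower-bound property adds up. -/

namespace SpaceSaving

variable {α : Type*} [DecidableEq α]

def completedEstimate (S : Finset α) (est : α → ℝ) (m : ℝ) (e : α) : ℝ :=
  if e ∈ S then est e else m

theorem le_completedEstimate {S : Finset α} {est f : α → ℝ} {m : ℝ}
    (h : ∀ e ∈ S, f e ≤ est e) (h' : ∀ e ∉ S, f e ≤ m) (e : α) :
    f e ≤ completedEstimate S est m e := by
  unfold completedEstimate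
  split_ifs with he
  exacts [h e he, h' e he]

theorem combined_eq_add_completedEstimate {S₁ S₂ : Finset α} {est₁ est₂ : α → ℝ} {m₁ m₂ : ℝ}
    {e : α} (he : e ∈ S₁ ∪ S₂) :
    (if e ∈ S₁ then (if e ∈ S₂ then est₁ e + est₂ e else est₁ e + m₂) else est₂ e + m₁) =
      completedEstimate S₁ est₁ m₁ e + completedEstimate S₂ est₂ m₂ e := by
  unfold completedEstimate
  by_cases h₁ : e ∈ S₁
  · by_cases h₂ : e ∈ S₂ <;> simp [h₁, h₂]
  · have h₂ : e ∈ S₂ := (Finset.mem_union.mp he).resolve_left h₁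
    simp [h₁, h₂, add_comm]

end SpaceSaving

open SpaceSaving

open Finset in
/-- The combine operation on two Space Saving summaries preserves the
lower-bound property: for every item of the combined summary, the true combined
frequency is at most the combined counter value. -/
theorem combine_preserves_lower_bound
    {α : Type*} [DecidableEq α]
    (S₁ S₂ : Finset α) (est₁ est₂ : α → ℝ) (m₁ m₂ : ℝ)
    (f₁ f₂ : α → ℝ)
    (h₁ : ∀ e ∈ S₁, f₁ e ≤ est₁ e) (h₁' : ∀ e ∉ S₁, f₁ e ≤ m₁)
    (h₂ : ∀ e ∈ S₂, f₂ e ≤ est₂ e) (h₂' : ∀ e ∉ S₂, f₂ e ≤ m₂) :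
    ∀ e ∈ S₁ ∪ S₂,
      f₁ e + f₂ e ≤
        (if e ∈ S₁ then (if e ∈ S₂ then est₁ e + est₂ e else est₁ e + m₂)
         else est₂ e + m₁) := by
  intro e he
  rw [combined_eq_add_completedEstimate he]
  exact add_le_add (le_completedEstimate h₁ h₁' e) (le_completedEstimate h₂ h₂' e)
end

section
/- (Merge exactness for k = 2, case |Σ_C| = 4.) If S₁ and S₂ are summaries of 2 counters each with |S₁| = |N₁|, |S₂| = |N₂| and Σ₁ ∩ Σ₂ = ∅, then the combined summary S_C over the 4 items has at least two counters equal to δ = f̂_{S₁}^min + f̂_{S₂}^min, δ is the minimum value in S_C, and the merged summary S_M obtained by keeping the 2 largest counters of S_C satisfies |S_M| = |N₁| + |N₂|. -/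
/-! Let `δ = m₁ + m₂` with `mᵢ` the minimum counter of `Sᵢ`. Adding `m₂` to every counter of
`S₁` (resp. `m₁` to `S₂`) makes the smaller counter of each summary equal to `δ`, and no counter
smaller; by disjointness these are two different items. The combined total is
`(N₁ + 2 m₂) + (N₂ + 2 m₁) = N₁ + N₂ + 2δ`, so dropping the two counters equal to `δ` leaves
exactly `N₁ + N₂`. -/

open Finset

theorem exists_mem_pair_eq_min {α β : Type*} [DecidableEq α] [LinearOrder β]
    (f : α → β) (a b : α) : ∃ e ∈ ({a, b} : Finset α), f e = min (f a) (f b) := by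
  rcases min_choice (f a) (f b) with h | h
  · exact ⟨a, mem_insert_self a {b}, h.symm⟩
  · exact ⟨b, mem_insert_of_mem (mem_singleton_self b), h.symm⟩

theorem sum_sdiff_pair_eq_sub {α β : Type*} [DecidableEq α] [AddCommGroup β]
    {s : Finset α} {f : α → β} {e e' : α} (he : e ∈ s) (he' : e' ∈ s) (hne : e ≠ e') :
    ∑ g ∈ s \ {e, e'}, f g = ∑ g ∈ s, f g - (f e + f e') := by
  rw [sum_sdiff_eq_sub (insert_subset he (singleton_subset_iff.2 he')), sum_pair hne]

open Finset in
/-- Merge exactness for `k = 2`, disjoint case `|Σ_C| = 4`: two full 2-counter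
summaries `S₁ = {a₁, b₁}`, `S₂ = {a₂, b₂}` with disjoint supports and
`|Sᵢ| = |Nᵢ|` are combined; the combined summary has at least two counters equal
to `δ = min va₁ vb₁ + min va₂ vb₂`, `δ` is its minimum value, and keeping the
two largest counters yields `|S_M| = |N₁| + |N₂|`. -/
theorem merge_exactness_disjoint_case
    {α : Type*} [DecidableEq α]
    (a₁ b₁ a₂ b₂ : α)
    (hdist : a₁ ≠ b₁ ∧ a₂ ≠ b₂ ∧ a₁ ≠ a₂ ∧ a₁ ≠ b₂ ∧ b₁ ≠ a₂ ∧ b₁ ≠ b₂)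
    (va₁ vb₁ va₂ vb₂ N₁ N₂ : ℝ)
    (hN₁ : va₁ + vb₁ = N₁) (hN₂ : va₂ + vb₂ = N₂)
    (cv : α → ℝ)
    (hcv₁ : cv a₁ = va₁ + min va₂ vb₂) (hcv₂ : cv b₁ = vb₁ + min va₂ vb₂)
    (hcv₃ : cv a₂ = va₂ + min va₁ vb₁) (hcv₄ : cv b₂ = vb₂ + min va₁ vb₁) :
    (∃ e ∈ ({a₁, b₁, a₂, b₂} : Finset α), ∃ e' ∈ ({a₁, b₁, a₂, b₂} : Finset α),
      e ≠ e' ∧ cv e = min va₁ vb₁ + min va₂ vb₂ ∧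
        cv e' = min va₁ vb₁ + min va₂ vb₂ ∧
      (∀ g ∈ ({a₁, b₁, a₂, b₂} : Finset α),
        min va₁ vb₁ + min va₂ vb₂ ≤ cv g) ∧
      ∑ g ∈ ({a₁, b₁, a₂, b₂} : Finset α) \ {e, e'}, cv g = N₁ + N₂) := by
  obtain ⟨h₁, h₂, h₃, h₄, h₅, h₆⟩ := hdist
  set δ := min va₁ vb₁ + min va₂ vb₂
  have hmin₁ : min (cv a₁) (cv b₁) = δ := by rw [hcv₁, hcv₂, min_add_add_right]
  have hmin₂ : min (cv a₂) (cv b₂) = δ := by rw [hcv₃, hcv₄, min_add_add_right, add_comm]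
  have hunion : ({a₁, b₁, a₂, b₂} : Finset α) = {a₁, b₁} ∪ {a₂, b₂} := by
    rw [insert_union, pair_comm, ← insert_eq, pair_comm]
  have hdisj : Disjoint ({a₁, b₁} : Finset α) {a₂, b₂} := by
    simp [h₃.symm, h₄.symm, h₅.symm, h₆.symm]
  have htotal : ∑ g ∈ ({a₁, b₁, a₂, b₂} : Finset α), cv g = N₁ + N₂ + 2 * δ := by
    rw [hunion, sum_union hdisj, sum_pair h₁, sum_pair h₂, hcv₁, hcv₂, hcv₃, hcv₄, ← hN₁, ← hN₂]
    ring
  have hlow : ∀ g ∈ ({a₁, b₁, a₂, b₂} : Finset α), δ ≤ cv g := by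
    simp only [mem_insert, mem_singleton]
    rintro g (rfl | rfl | rfl | rfl)
    exacts [hmin₁ ▸ min_le_left _ _, hmin₁ ▸ min_le_right _ _,
      hmin₂ ▸ min_le_left _ _, hmin₂ ▸ min_le_right _ _]
  obtain ⟨e, he, hce⟩ := exists_mem_pair_eq_min cv a₁ b₁
  obtain ⟨e', he', hce'⟩ := exists_mem_pair_eq_min cv a₂ b₂
  have hmem : e ∈ ({a₁, b₁, a₂, b₂} : Finset α) := hunion ▸ mem_union_left _ he
  have hmem' : e' ∈ ({a₁, b₁, a₂, b₂} : Finset α) := hunion ▸ mem_union_right _ he'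
  have hne : e ≠ e' := hdisj.forall_ne_finset he he'
  refine ⟨e, hmem, e', hmem', hne, hce.trans hmin₁, hce'.trans hmin₂, hlow, ?_⟩
  rw [sum_sdiff_pair_eq_sub hmem hmem' hne, htotal, hce, hce', hmin₁, hmin₂]
  ring
end

section
/- (Merge exactness for k = 2, general case.) Let S₁, S₂ be Space Saving summaries each with exactly 2 counters (possibly with empty counters of value 0), satisfying |S_i| = |N_i|. Form S_C by the combine rule and S_M by retaining the 2 counters of S_C with the greatest values. Then |S_M| = |N₁| + |N₂|, i.e., Σ over discarded counters of their values equals x·δ where x = |Σ_C| - 2 and δ = f̂_{S₁}^min + f̂_{S₂}^min. -/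
/-!
The combined value of a counter is the sum of its two values after padding each summary with
its own minimum, so `∑ S_C = |N₁| + |N₂| + |Σ_C \ S₁|·m₁ + |Σ_C \ S₂|·m₂`, and a summary that is
not full has minimum `0`, which turns both error terms into `(|Σ_C| - 2)·m_i`. Every combined value
is at least `δ = m₁ + m₂`, and all counters except the (at most one) non-minimal counter of each
full summary attain it. Hence at least `|Σ_C| - 2` counters equal `δ`; since the kept counters are
the largest ones, every discarded counter equals `δ`.
-/

open Finset

namespace SpaceSaving

variable {α : Type*} [DecidableEq α]

def padded (S : Finset α) (f : α → ℝ) (m : ℝ) (e : α) : ℝ :=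
  if e ∈ S then f e else m

lemma le_padded {S : Finset α} {f : α → ℝ} {m : ℝ} (h : ∀ e ∈ S, m ≤ f e) (e : α) :
    m ≤ padded S f m e := by
  unfold padded
  split_ifs with he
  exacts [h e he, le_rfl]

lemma ite_eq_padded_add_padded {S₁ S₂ : Finset α} {f₁ f₂ : α → ℝ} {m₁ m₂ : ℝ} {e : α}
    (he : e ∈ S₁ ∪ S₂) :
    (if e ∈ S₁ then (if e ∈ S₂ then f₁ e + f₂ e else f₁ e + m₂) else f₂ e + m₁) =
      padded S₁ f₁ m₁ e + padded S₂ f₂ m₂ e := by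
  unfold padded
  split_ifs <;> simp_all [add_comm]

lemma sum_padded {S U : Finset α} (hSU : S ⊆ U) (f : α → ℝ) (m : ℝ) :
    ∑ e ∈ U, padded S f m e = ∑ e ∈ S, f e + #(U \ S) * m := by
  simp only [padded]
  rw [sum_ite, filter_mem_eq_inter, inter_eq_right.mpr hSU, ← sdiff_eq_filter,
    sum_const, nsmul_eq_mul]

lemma card_sdiff_mul_eq {S U : Finset α} {k : ℕ} {m : ℝ} (hSU : S ⊆ U) (hk : #S ≤ k)
    (hm : #S < k → m = 0) : (#(U \ S) : ℝ) * m = ((#U - k : ℕ) : ℝ) * m := by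
  rcases hk.lt_or_eq with hlt | rfl
  · simp [hm hlt]
  · rw [card_sdiff_of_subset hSU]

lemma exists_card_le_forall_mem_sdiff_eq {S : Finset α} {f : α → ℝ} {m : ℝ} {k : ℕ}
    (hk : #S ≤ k + 1) (hmin : #S = k + 1 → ∃ e ∈ S, f e = m) :
    ∃ R : Finset α, #R ≤ k ∧ ∀ e ∈ S \ R, f e = m := by
  rcases hk.lt_or_eq with hlt | hfull
  · exact ⟨S, by omega, by simp⟩
  · obtain ⟨a, ha, hfa⟩ := hmin hfull
    refine ⟨S.erase a, by rw [card_erase_of_mem ha]; omega, fun e he => ?_⟩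
    rw [sdiff_erase_self ha, mem_singleton] at he
    rwa [he]

lemma padded_eq_of_notMem {S R : Finset α} {f : α → ℝ} {m : ℝ} (h : ∀ e ∈ S \ R, f e = m)
    {e : α} (he : e ∉ R) : padded S f m e = m := by
  unfold padded
  split_ifs with hS
  exacts [h e (mem_sdiff.mpr ⟨hS, he⟩), rfl]

lemma card_sub_sub_le_card_filter_eq {S₁ S₂ R₁ R₂ U : Finset α} {f₁ f₂ g : α → ℝ} {m₁ m₂ : ℝ}
    (hg : ∀ e ∈ U, g e = padded S₁ f₁ m₁ e + padded S₂ f₂ m₂ e)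
    (h₁ : ∀ e ∈ S₁ \ R₁, f₁ e = m₁) (h₂ : ∀ e ∈ S₂ \ R₂, f₂ e = m₂) :
    #U - #R₁ - #R₂ ≤ #(U.filter (g · = m₁ + m₂)) := by
  have hsub : U \ (R₁ ∪ R₂) ⊆ U.filter (g · = m₁ + m₂) := fun e he => by
    obtain ⟨heU, he⟩ := mem_sdiff.mp he
    rw [mem_union, not_or] at he
    rw [mem_filter, hg e heU, padded_eq_of_notMem h₁ he.1, padded_eq_of_notMem h₂ he.2]
    exact ⟨heU, rfl⟩
  have := le_card_sdiff (R₁ ∪ R₂) U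
  have := card_union_le R₁ R₂
  have := card_le_card hsub
  omega

lemma eq_of_mem_sdiff_of_card_le {U T : Finset α} {f : α → ℝ} {δ : ℝ}
    (hlow : ∀ g ∈ U \ T, δ ≤ f g) (hTmax : ∀ e ∈ T, ∀ g ∈ U \ T, f g ≤ f e)
    (hcard : #(U \ T) ≤ #(U.filter (f · = δ))) : ∀ g ∈ U \ T, f g = δ := by
  intro g hg
  by_cases hkept : ∃ w ∈ U.filter (f · = δ), w ∈ T
  · obtain ⟨w, hw, hwT⟩ := hkept
    have hwδ : f w = δ := (mem_filter.mp hw).2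
    linarith [hlow g hg, hTmax w hwT g hg]
  · simp only [not_exists, not_and] at hkept
    have hsub : U.filter (f · = δ) ⊆ U \ T :=
      fun w hw => mem_sdiff.mpr ⟨(mem_filter.mp hw).1, hkept w hw⟩
    rw [← eq_of_subset_of_card_le hsub hcard] at hg
    exact (mem_filter.mp hg).2

end SpaceSaving

open SpaceSaving

open Finset in
theorem merge_exactness_general_general
    {α : Type*} [DecidableEq α]
    (S₁ S₂ : Finset α) (hc₁ : S₁.card ≤ 2) (hc₂ : S₂.card ≤ 2)
    (est₁ est₂ : α → ℝ)
    (m₁ m₂ : ℝ)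
    (hm₁ : (∀ e ∈ S₁, m₁ ≤ est₁ e) ∧ (S₁.card = 2 → ∃ e ∈ S₁, est₁ e = m₁) ∧
      (S₁.card < 2 → m₁ = 0))
    (hm₂ : (∀ e ∈ S₂, m₂ ≤ est₂ e) ∧ (S₂.card = 2 → ∃ e ∈ S₂, est₂ e = m₂) ∧
      (S₂.card < 2 → m₂ = 0))
    (N₁ N₂ : ℝ) (hN₁ : ∑ e ∈ S₁, est₁ e = N₁) (hN₂ : ∑ e ∈ S₂, est₂ e = N₂)
    (cv : α → ℝ)
    (hcv : ∀ e ∈ S₁ ∪ S₂, cv e =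
      (if e ∈ S₁ then (if e ∈ S₂ then est₁ e + est₂ e else est₁ e + m₂)
       else est₂ e + m₁))
    (T : Finset α) (hT : T ⊆ S₁ ∪ S₂)
    (hTcard : T.card = min (S₁ ∪ S₂).card 2)
    (hTmax : ∀ e ∈ T, ∀ g ∈ (S₁ ∪ S₂) \ T, cv g ≤ cv e) :
    ∑ e ∈ T, cv e = N₁ + N₂ ∧
    ∑ g ∈ (S₁ ∪ S₂) \ T, cv g = ((S₁ ∪ S₂).card - 2 : ℕ) * (m₁ + m₂) := by
  set U := S₁ ∪ S₂
  have hcv_padded : ∀ e ∈ U, cv e = padded S₁ est₁ m₁ e + padded S₂ est₂ m₂ e :=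
    fun e he => (hcv e he).trans (ite_eq_padded_add_padded he)
  have hlow : ∀ e ∈ U, m₁ + m₂ ≤ cv e := fun e he => by
    rw [hcv_padded e he]
    exact add_le_add (le_padded hm₁.1 e) (le_padded hm₂.1 e)
  obtain ⟨R₁, hR₁, hR₁min⟩ := exists_card_le_forall_mem_sdiff_eq (k := 1) hc₁ hm₁.2.1
  obtain ⟨R₂, hR₂, hR₂min⟩ := exists_card_le_forall_mem_sdiff_eq (k := 1) hc₂ hm₂.2.1
  have hDcard : #(U \ T) = #U - 2 := by
    rw [card_sdiff_of_subset hT, hTcard]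
    omega
  have hdiscarded : ∀ g ∈ U \ T, cv g = m₁ + m₂ := by
    refine eq_of_mem_sdiff_of_card_le (fun g hg => hlow g (mem_sdiff.mp hg).1) hTmax ?_
    have := card_sub_sub_le_card_filter_eq hcv_padded hR₁min hR₂min
    omega
  have hsum_discarded : ∑ g ∈ U \ T, cv g = ((#U - 2 : ℕ) : ℝ) * (m₁ + m₂) := by
    rw [sum_congr rfl hdiscarded, sum_const, hDcard, nsmul_eq_mul]
  have hsum_total : ∑ e ∈ U, cv e = N₁ + N₂ + ((#U - 2 : ℕ) : ℝ) * (m₁ + m₂) := by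
    rw [sum_congr rfl hcv_padded, sum_add_distrib, sum_padded subset_union_left,
      sum_padded subset_union_right, card_sdiff_mul_eq subset_union_left hc₁ hm₁.2.2,
      card_sdiff_mul_eq subset_union_right hc₂ hm₂.2.2, hN₁, hN₂]
    ring
  refine ⟨?_, hsum_discarded⟩
  linarith [sum_sdiff hT (f := cv)]

open Finset in
/-- Merge exactness for `k = 2`, general case: two Space Saving summaries with
(at most) 2 occupied counters each, satisfying `|Sᵢ| = |Nᵢ|`, are combined and
then truncated to the 2 largest counters.  The merged summary `S_M` satisfies
`|S_M| = |N₁| + |N₂|`, i.e. the discarded counters sum to `x·δ` where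
`x = |Σ_C| - 2` and `δ = f̂_{S₁}^min + f̂_{S₂}^min`. -/
theorem merge_exactness_general
    {α : Type*} [DecidableEq α]
    (S₁ S₂ : Finset α) (hc₁ : S₁.card ≤ 2) (hc₂ : S₂.card ≤ 2)
    (est₁ est₂ : α → ℝ)
    (hpos₁ : ∀ e ∈ S₁, 0 < est₁ e) (hz₁ : ∀ e ∉ S₁, est₁ e = 0)
    (hpos₂ : ∀ e ∈ S₂, 0 < est₂ e) (hz₂ : ∀ e ∉ S₂, est₂ e = 0)
    (m₁ m₂ : ℝ)
    (hm₁ : (∀ e ∈ S₁, m₁ ≤ est₁ e) ∧ (S₁.card = 2 → ∃ e ∈ S₁, est₁ e = m₁) ∧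
      (S₁.card < 2 → m₁ = 0))
    (hm₂ : (∀ e ∈ S₂, m₂ ≤ est₂ e) ∧ (S₂.card = 2 → ∃ e ∈ S₂, est₂ e = m₂) ∧
      (S₂.card < 2 → m₂ = 0))
    (N₁ N₂ : ℝ) (hN₁ : ∑ e ∈ S₁, est₁ e = N₁) (hN₂ : ∑ e ∈ S₂, est₂ e = N₂)
    (cv : α → ℝ)
    (hcv : ∀ e ∈ S₁ ∪ S₂, cv e =
      (if e ∈ S₁ then (if e ∈ S₂ then est₁ e + est₂ e else est₁ e + m₂)
       else est₂ e + m₁))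
    (T : Finset α) (hT : T ⊆ S₁ ∪ S₂)
    (hTcard : T.card = min (S₁ ∪ S₂).card 2)
    (hTmax : ∀ e ∈ T, ∀ g ∈ (S₁ ∪ S₂) \ T, cv g ≤ cv e) :
    ∑ e ∈ T, cv e = N₁ + N₂ ∧
    ∑ g ∈ (S₁ ∪ S₂) \ T, cv g = ((S₁ ∪ S₂).card - 2 : ℕ) * (m₁ + m₂) :=
  merge_exactness_general_general S₁ S₂ hc₁ hc₂ est₁ est₂ m₁ m₂ hm₁ hm₂ N₁ N₂ hN₁ hN₂ cv hcv T hT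
    hTcard hTmax
end

section
/- (Merge preserves the upper-bound error.) Under the combine rule with merged summary S_M keeping the 2 largest counters of S_C, for every monitored item e ∈ Σ_M: f̂_{S_M}(e) - f̂_{S_M}^min ≤ f_N(e) ≤ f̂_{S_M}(e), and for every unmonitored item e ∉ Σ_M: f_N(e) ≤ f̂_{S_M}^min, provided S₁ and S₂ each satisfy the analogous properties for their respective sub-streams, where f_N = f_{N₁} + f_{N₂}. -/
/-!
Extend summary `i` to every item by letting an unmonitored item report the minimum `m_i`. On
`S₁ ∪ S₂` each combined counter is the sum of the two extended estimates, and the extended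
estimate of summary `i` lies between `max m_i (f_i e)` and `f_i e + m_i`. So it suffices that
`m₁ + m₂ ≤ mM`: when two counters are kept, `mM` is one of them and every counter is at least
`m₁ + m₂`; otherwise nothing was evicted and all minima are `0`. An item evicted by the merge has
a counter below `mM`, and an item outside `S₁ ∪ S₂` has `f₁ e + f₂ e ≤ m₁ + m₂`.
-/

namespace SpaceSaving

variable {α β : Type*} [DecidableEq α]

def estimate (S : Finset α) (est : α → β) (m : β) (e : α) : β :=
  if e ∈ S then est e else m

variable {S : Finset α} {est f : α → β} {m : β}

theorem estimate_of_notMem {e : α} (he : e ∉ S) : estimate S est m e = m := if_neg he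

theorem le_estimate [LE β] (hS : ∀ e ∈ S, f e ≤ est e) (hSc : ∀ e ∉ S, f e ≤ m) (e : α) :
    f e ≤ estimate S est m e := by
  unfold estimate
  split_ifs with he
  exacts [hS e he, hSc e he]

theorem le_estimate_of_le [Preorder β] (hS : ∀ e ∈ S, m ≤ est e) (e : α) :
    m ≤ estimate S est m e := by
  unfold estimate
  split_ifs with he
  exacts [hS e he, le_rfl]

theorem estimate_le_add [AddCommGroup β] [PartialOrder β] [IsOrderedAddMonoid β]
    (hS : ∀ e ∈ S, est e - m ≤ f e) {e : α} (hf : 0 ≤ f e) :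
    estimate S est m e ≤ f e + m := by
  unfold estimate
  split_ifs with he
  exacts [sub_le_iff_le_add.mp (hS e he), le_add_of_nonneg_left hf]

theorem combine_eq_estimate_add [AddCommMagma β] {S₁ S₂ : Finset α} {est₁ est₂ : α → β}
    {m₁ m₂ : β} {e : α} (he : e ∈ S₁ ∪ S₂) :
    (if e ∈ S₁ then (if e ∈ S₂ then est₁ e + est₂ e else est₁ e + m₂) else est₂ e + m₁) =
      estimate S₁ est₁ m₁ e + estimate S₂ est₂ m₂ e := by
  unfold estimate
  have := Finset.mem_union.mp he
  split_ifs <;> first | rfl | exact add_comm _ _ | tauto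

end SpaceSaving

theorem Finset.card_eq_of_card_eq_min_of_mem_sdiff {α : Type*} [DecidableEq α]
    {T U : Finset α} {k : ℕ} {e : α} (hT : T ⊆ U) (hTcard : T.card = min U.card k)
    (he : e ∈ U \ T) : T.card = k := by
  by_contra hk
  have hTU : T = U := Finset.eq_of_subset_of_card_le hT (by omega)
  exact (Finset.mem_sdiff.mp he).2 (hTU ▸ (Finset.mem_sdiff.mp he).1)

open Finset SpaceSaving in
theorem merge_preserves_error_bounds_general
    {α : Type*} [DecidableEq α]
    (S₁ S₂ : Finset α)
    (est₁ est₂ : α → ℝ) (m₁ m₂ : ℝ)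
    (f₁ f₂ : α → ℝ) (hf₁ : ∀ e, 0 ≤ f₁ e) (hf₂ : ∀ e, 0 ≤ f₂ e)
    (hm₁ : (∀ e ∈ S₁, m₁ ≤ est₁ e) ∧ (S₁.card = 2 → ∃ e ∈ S₁, est₁ e = m₁) ∧
      (S₁.card < 2 → m₁ = 0))
    (hm₂ : (∀ e ∈ S₂, m₂ ≤ est₂ e) ∧ (S₂.card = 2 → ∃ e ∈ S₂, est₂ e = m₂) ∧
      (S₂.card < 2 → m₂ = 0))
    (hSS₁ : ∀ e ∈ S₁, est₁ e - m₁ ≤ f₁ e ∧ f₁ e ≤ est₁ e)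
    (hSS₁' : ∀ e ∉ S₁, f₁ e ≤ m₁)
    (hSS₂ : ∀ e ∈ S₂, est₂ e - m₂ ≤ f₂ e ∧ f₂ e ≤ est₂ e)
    (hSS₂' : ∀ e ∉ S₂, f₂ e ≤ m₂)
    (cv : α → ℝ)
    (hcv : ∀ e ∈ S₁ ∪ S₂, cv e =
      (if e ∈ S₁ then (if e ∈ S₂ then est₁ e + est₂ e else est₁ e + m₂)
       else est₂ e + m₁))
    (T : Finset α) (hT : T ⊆ S₁ ∪ S₂)
    (hTcard : T.card = min (S₁ ∪ S₂).card 2)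
    (hTmax : ∀ e ∈ T, ∀ g ∈ (S₁ ∪ S₂) \ T, cv g ≤ cv e)
    (mM : ℝ)
    (hmM : (∀ e ∈ T, mM ≤ cv e) ∧ (T.card = 2 → ∃ e ∈ T, cv e = mM) ∧
      (T.card < 2 → mM = 0)) :
    (∀ e ∈ T, cv e - mM ≤ f₁ e + f₂ e ∧ f₁ e + f₂ e ≤ cv e) ∧
    (∀ e ∉ T, f₁ e + f₂ e ≤ mM) := by
  obtain ⟨hm₁, -, hm₁₀⟩ := hm₁
  obtain ⟨hm₂, -, hm₂₀⟩ := hm₂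
  obtain ⟨-, hmM, hmM₀⟩ := hmM
  have hcvU : ∀ e ∈ S₁ ∪ S₂, cv e = estimate S₁ est₁ m₁ e + estimate S₂ est₂ m₂ e :=
    fun e he ↦ (hcv e he).trans (combine_eq_estimate_add he)
  have hf : ∀ e, f₁ e + f₂ e ≤ estimate S₁ est₁ m₁ e + estimate S₂ est₂ m₂ e := fun e ↦
    add_le_add (le_estimate (fun e he ↦ (hSS₁ e he).2) hSS₁' e)
      (le_estimate (fun e he ↦ (hSS₂ e he).2) hSS₂' e)
  have hmin : m₁ + m₂ ≤ mM := by
    rcases (show T.card ≤ 2 by omega).eq_or_lt with hT2 | hT2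
    · obtain ⟨t, ht, rfl⟩ := hmM hT2
      rw [hcvU t (hT ht)]
      exact add_le_add (le_estimate_of_le hm₁ t) (le_estimate_of_le hm₂ t)
    · have hU : (S₁ ∪ S₂).card < 2 := by omega
      rw [hm₁₀ ((card_le_card subset_union_left).trans_lt hU),
        hm₂₀ ((card_le_card subset_union_right).trans_lt hU), hmM₀ hT2, add_zero]
  refine ⟨fun e he ↦ ⟨?_, hcvU e (hT he) ▸ hf e⟩, fun e he ↦ ?_⟩
  · rw [hcvU e (hT he)]
    linarith [estimate_le_add (fun e he ↦ (hSS₁ e he).1) (hf₁ e),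
      estimate_le_add (fun e he ↦ (hSS₂ e he).1) (hf₂ e)]
  · by_cases heU : e ∈ S₁ ∪ S₂
    · have heT : e ∈ (S₁ ∪ S₂) \ T := mem_sdiff.mpr ⟨heU, he⟩
      obtain ⟨t, ht, rfl⟩ := hmM (card_eq_of_card_eq_min_of_mem_sdiff hT hTcard heT)
      calc f₁ e + f₂ e ≤ cv e := hcvU e heU ▸ hf e
        _ ≤ cv t := hTmax t ht e heT
    · rw [mem_union, not_or] at heU
      have hfe := hf e
      rw [estimate_of_notMem heU.1, estimate_of_notMem heU.2] at hfe
      exact hfe.trans hmin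

open Finset in
/-- Merging preserves the Space Saving error bounds: if `S₁`, `S₂` are
2-counter summaries of disjoint decayed sub-streams `N₁`, `N₂` satisfying the
Space Saving properties, then the merged summary `S_M` (combine, keep the two
largest counters) satisfies them for the combined stream `f = f₁ + f₂`. -/
theorem merge_preserves_error_bounds
    {α : Type*} [Fintype α] [DecidableEq α]
    (S₁ S₂ : Finset α) (hc₁ : S₁.card ≤ 2) (hc₂ : S₂.card ≤ 2)
    (est₁ est₂ : α → ℝ) (m₁ m₂ : ℝ)
    (f₁ f₂ : α → ℝ) (hf₁ : ∀ e, 0 ≤ f₁ e) (hf₂ : ∀ e, 0 ≤ f₂ e)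
    (hm₁ : (∀ e ∈ S₁, m₁ ≤ est₁ e) ∧ (S₁.card = 2 → ∃ e ∈ S₁, est₁ e = m₁) ∧
      (S₁.card < 2 → m₁ = 0))
    (hm₂ : (∀ e ∈ S₂, m₂ ≤ est₂ e) ∧ (S₂.card = 2 → ∃ e ∈ S₂, est₂ e = m₂) ∧
      (S₂.card < 2 → m₂ = 0))
    (hSS₁ : ∀ e ∈ S₁, est₁ e - m₁ ≤ f₁ e ∧ f₁ e ≤ est₁ e)
    (hSS₁' : ∀ e ∉ S₁, f₁ e ≤ m₁)
    (hSS₂ : ∀ e ∈ S₂, est₂ e - m₂ ≤ f₂ e ∧ f₂ e ≤ est₂ e)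
    (hSS₂' : ∀ e ∉ S₂, f₂ e ≤ m₂)
    (hsize₁ : ∑ e ∈ S₁, est₁ e ≤ ∑ e, f₁ e)
    (hsize₂ : ∑ e ∈ S₂, est₂ e ≤ ∑ e, f₂ e)
    (cv : α → ℝ)
    (hcv : ∀ e ∈ S₁ ∪ S₂, cv e =
      (if e ∈ S₁ then (if e ∈ S₂ then est₁ e + est₂ e else est₁ e + m₂)
       else est₂ e + m₁))
    (T : Finset α) (hT : T ⊆ S₁ ∪ S₂)
    (hTcard : T.card = min (S₁ ∪ S₂).card 2)
    (hTmax : ∀ e ∈ T, ∀ g ∈ (S₁ ∪ S₂) \ T, cv g ≤ cv e)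
    (mM : ℝ)
    (hmM : (∀ e ∈ T, mM ≤ cv e) ∧ (T.card = 2 → ∃ e ∈ T, cv e = mM) ∧
      (T.card < 2 → mM = 0)) :
    (∀ e ∈ T, cv e - mM ≤ f₁ e + f₂ e ∧ f₁ e + f₂ e ≤ cv e) ∧
    (∀ e ∉ T, f₁ e + f₂ e ≤ mM) :=
  merge_preserves_error_bounds_general S₁ S₂ est₁ est₂ m₁ m₂ f₁ f₂ hf₁ hf₂ hm₁ hm₂ hSS₁ hSS₁' hSS₂
    hSS₂' cv hcv T hT hTcard hTmax mM hmM
end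

section
/- The Space Saving update with weighted increments preserves the invariant |S| = total processed weight and the overestimation property: after processing any sequence of (item, weight) pairs with positive weights on a 2-counter summary, the sum of the counters equals the sum of all processed weights, and every item's true accumulated weight is at most its counter value (if monitored) or at most the minimum counter value (if not monitored). -/
/-- A 2-counter Space Saving summary: two optionally-occupied counters with
monitored items `i₁`, `i₂` and values `c₁`, `c₂`. -/
structure SS2 (α : Type*) where
  i₁ : Option α
  i₂ : Option α
  c₁ : ℝ
  c₂ : ℝ

/-- Weighted Space Saving update: if the arriving item is monitored, add its
weight to the corresponding counter; else occupy an empty counter; else add the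
weight to the minimum counter and replace its monitored item. -/
noncomputable def SS2.update {α : Type*} [DecidableEq α] (s : SS2 α) (i : α) (x : ℝ) : SS2 α :=
  if s.i₁ = some i then { s with c₁ := s.c₁ + x }
  else if s.i₂ = some i then { s with c₂ := s.c₂ + x }
  else if s.i₁ = none then { s with i₁ := some i, c₁ := x }
  else if s.i₂ = none then { s with i₂ := some i, c₂ := x }
  else if s.c₁ ≤ s.c₂ then { s with i₁ := some i, c₁ := s.c₁ + x }
  else { s with i₂ := some i, c₂ := s.c₂ + x }

/-- Processing a sequence of (item, weight) pairs starting from the empty summary. -/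
noncomputable def SS2.process {α : Type*} [DecidableEq α] (l : List (α × ℝ)) : SS2 α :=
  l.foldl (fun s p => s.update p.1 p.2) ⟨none, none, 0, 0⟩

/-- The estimated frequency of `v`: its counter value if monitored, else the
minimum counter value. -/
def SS2.est {α : Type*} [DecidableEq α] (s : SS2 α) (v : α) : ℝ :=
  if s.i₁ = some v then s.c₁ else if s.i₂ = some v then s.c₂ else min s.c₁ s.c₂

/-- The true accumulated weight of item `v` in the processed prefix. -/
def trueWeight {α : Type*} [DecidableEq α] (l : List (α × ℝ)) (v : α) : ℝ :=
  ((l.filter (fun p => p.1 = v)).map Prod.snd).sum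

/-!
Call a summary vacant-zero if each unoccupied counter holds `0`; updates preserve this. For such a
summary an update with weight `x` adds exactly `x` to `c₁ + c₂` (an empty counter is filled with `x`).
With `x ≥ 0` no counter ever decreases, and the counter taken over by a new item starts from the old
minimum, so the estimate of the arriving item grows by at least `x` while every other estimate does
not decrease. Summing these steps along the stream gives both invariants.
-/

theorem trueWeight_nil {α : Type*} [DecidableEq α] (v : α) : trueWeight [] v = 0 := rfl

theorem trueWeight_cons {α : Type*} [DecidableEq α] (p : α × ℝ) (l : List (α × ℝ)) (v : α) :
    trueWeight (p :: l) v = (if p.1 = v then p.2 else 0) + trueWeight l v := by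
  unfold trueWeight
  split_ifs with h <;> simp [h]

namespace SS2

variable {α : Type*}

def VacantZero (s : SS2 α) : Prop :=
  (s.i₁ = none → s.c₁ = 0) ∧ (s.i₂ = none → s.c₂ = 0)

theorem vacantZero_empty : (⟨none, none, 0, 0⟩ : SS2 α).VacantZero :=
  ⟨fun _ => rfl, fun _ => rfl⟩

variable [DecidableEq α] {s : SS2 α} {i : α} {x : ℝ}

theorem VacantZero.update (hs : s.VacantZero) : (s.update i x).VacantZero := by
  obtain ⟨h₁, h₂⟩ := hs
  unfold SS2.update
  split_ifs <;> simp_all [VacantZero]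

theorem VacantZero.c₁_add_c₂_update (hs : s.VacantZero) :
    (s.update i x).c₁ + (s.update i x).c₂ = s.c₁ + s.c₂ + x := by
  obtain ⟨h₁, h₂⟩ := hs
  unfold SS2.update
  split_ifs <;> simp_all <;> ring

theorem est_le_est_update_self (hs : s.VacantZero) : s.est i + x ≤ (s.update i x).est i := by
  obtain ⟨h₁, h₂⟩ := hs
  unfold SS2.update est
  split_ifs <;> simp_all

theorem est_le_est_update_of_ne (hs : s.VacantZero) (hx : 0 ≤ x) {v : α} (hv : i ≠ v) :
    s.est v ≤ (s.update i x).est v := by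
  obtain ⟨h₁, h₂⟩ := hs
  unfold SS2.update est
  split_ifs <;> simp_all [le_of_lt]

theorem est_add_le_est_update (hs : s.VacantZero) (hx : 0 ≤ x) (v : α) :
    s.est v + (if i = v then x else 0) ≤ (s.update i x).est v := by
  by_cases hv : i = v
  · subst hv
    simpa using est_le_est_update_self hs
  · simpa [hv] using est_le_est_update_of_ne hs hx hv

noncomputable def processFrom (s : SS2 α) (l : List (α × ℝ)) : SS2 α :=
  l.foldl (fun s p => s.update p.1 p.2) s

@[simp] theorem processFrom_nil (s : SS2 α) : processFrom s [] = s := rfl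

@[simp] theorem processFrom_cons (s : SS2 α) (p : α × ℝ) (l : List (α × ℝ)) :
    processFrom s (p :: l) = processFrom (s.update p.1 p.2) l := rfl

theorem VacantZero.c₁_add_c₂_processFrom (hs : s.VacantZero) (l : List (α × ℝ)) :
    (processFrom s l).c₁ + (processFrom s l).c₂ = s.c₁ + s.c₂ + (l.map Prod.snd).sum := by
  induction l generalizing s with
  | nil => simp
  | cons p l ih =>
    rw [processFrom_cons, ih hs.update, hs.c₁_add_c₂_update, List.map_cons, List.sum_cons]
    ring

theorem VacantZero.est_add_trueWeight_le_est_processFrom (hs : s.VacantZero) (l : List (α × ℝ))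
    (hl : ∀ p ∈ l, 0 ≤ p.2) (v : α) :
    s.est v + trueWeight l v ≤ (processFrom s l).est v := by
  induction l generalizing s with
  | nil => simp [trueWeight_nil]
  | cons p l ih =>
    have hl' : ∀ q ∈ l, 0 ≤ q.2 := fun q hq => hl q (List.mem_cons_of_mem p hq)
    calc s.est v + trueWeight (p :: l) v
        = (s.est v + if p.1 = v then p.2 else 0) + trueWeight l v := by
          rw [trueWeight_cons]; ring
      _ ≤ (s.update p.1 p.2).est v + trueWeight l v := by
          gcongr; exact est_add_le_est_update hs (hl p List.mem_cons_self) v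
      _ ≤ (processFrom s (p :: l)).est v := ih hs.update hl'

end SS2

/-- The weighted Space Saving update preserves the invariant
`|S| = total processed weight` and the overestimation property: every item's
true accumulated weight is at most its counter value (if monitored) or at most
the minimum counter value (if not monitored). -/
theorem SS2.process_invariants {α : Type*} [DecidableEq α]
    (l : List (α × ℝ)) (hpos : ∀ p ∈ l, 0 < p.2) :
    (SS2.process (α := α) l).c₁ + (SS2.process (α := α) l).c₂ =
      (l.map Prod.snd).sum ∧
    ∀ v : α, trueWeight l v ≤ (SS2.process (α := α) l).est v := by
  have hprocess : SS2.process l = SS2.processFrom ⟨none, none, 0, 0⟩ l := rfl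
  rw [hprocess]
  refine ⟨?_, fun v => ?_⟩
  · simpa using SS2.vacantZero_empty.c₁_add_c₂_processFrom l
  · simpa [SS2.est] using
      SS2.vacantZero_empty.est_add_trueWeight_le_est_processFrom l (fun p hp => (hpos p hp).le) v
end

section
/- If every φ-heavy hitter passes the candidate filter and the point estimate p satisfies f_v ≤ p ≤ f_v + εC with ε < φ, then the output set F of the query (items whose point estimate exceeds φC) contains all items with f_v > φC and no item with f_v ≤ (φ - ε)C. -/
theorem atfhh_guarantee_general
    {α : Type*} (f p : α → ℝ) (C φ ε : ℝ)
    (cand F : Set α)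
    (hcand : ∀ v, f v > φ * C → v ∈ cand)
    (hest : ∀ v ∈ cand, f v ≤ p v ∧ p v ≤ f v + ε * C)
    (hF : F = {v ∈ cand | p v > φ * C}) :
    (∀ v, f v > φ * C → v ∈ F) ∧
    (∀ v ∈ F, ¬ f v ≤ (φ - ε) * C) := by
  subst hF
  constructor
  · intro v hheavy
    have hv : v ∈ cand := hcand v hheavy
    exact ⟨hv, hheavy.trans_le (hest v hv).1⟩
  · rintro v ⟨hv, hreported⟩ hlight
    have : p v ≤ φ * C :=
      calc p v ≤ f v + ε * C := (hest v hv).2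
        _ ≤ (φ - ε) * C + ε * C := by gcongr
        _ = φ * C := by ring
    exact this.not_gt hreported

/-- ATFHH guarantee: if every `φ`-heavy hitter passes the candidate filter and
each candidate's point estimate `p v` satisfies `f v ≤ p v ≤ f v + ε C` with
`ε < φ`, then the output set `F = {v ∈ candidates | p v > φ C}` contains every
item with `f v > φ C` and no item with `f v ≤ (φ - ε) C`. -/
theorem atfhh_guarantee
    {α : Type*} (f p : α → ℝ) (C φ ε : ℝ)
    (hε : 0 < ε) (hεφ : ε < φ) (hφ : φ < 1) (hC : 0 < C)
    (cand F : Set α)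
    (hcand : ∀ v, f v > φ * C → v ∈ cand)
    (hest : ∀ v ∈ cand, f v ≤ p v ∧ p v ≤ f v + ε * C)
    (hF : F = {v ∈ cand | p v > φ * C}) :
    (∀ v, f v > φ * C → v ∈ F) ∧
    (∀ v ∈ F, ¬ f v ≤ (φ - ε) * C) :=
  atfhh_guarantee_general f p C φ ε cand F hcand hest hF
end
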